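/- arXiv:2111.13151 — 8 statements merged into one kernel-verified Lean document; each statement's English description precedes it below -/
import Mathlib

section
/- Let μ be a real number and ν > 0, with a = arcsinh((1−μ)/ν), b = arcsinh((1+μ)/ν), and g(t) = μ + ν·sinh((a+b)(t−1)/2 + a). Then for every real t, g'(t) / √((g(t)−μ)² + ν²) = (a+b)/2. In particular, the transplanted integrand of f_{μ,ν}(t) = 1/√((t−μ)²+ν²) under g is constant, so the one-point transplanted Gauss rule 2·g'(t₁)·f_{μ,ν}(g(t₁)) at any node t₁ equals a+b, the exact value of ∫_{−1}^{1} f_{μ,ν}(t) dt. -/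
/-! The substitution `t = μ + ν sinh s` turns `dt / √((t-μ)² + ν²)` into `ds`, since
`√((ν sinh s)² + ν²) = ν cosh s`. Hence `arsinh ((t - μ) / ν)` is an antiderivative of
`f_{μ,ν}`, and any map `μ + ν sinh ∘ u` transplants `f_{μ,ν}` into the derivative of `u`,
which for the affine `u` with `u 1 = a`, `u (-1) = -b` is the constant `(a + b) / 2`. -/

open Real

lemma sqrt_mul_sinh_sq_add_sq {ν : ℝ} (hν : 0 ≤ ν) (s : ℝ) :
    √((ν * sinh s) ^ 2 + ν ^ 2) = ν * cosh s := by
  rw [show (ν * sinh s) ^ 2 + ν ^ 2 = (ν * cosh s) ^ 2 by rw [mul_pow, mul_pow, cosh_sq]; ring]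
  exact sqrt_sq (by positivity)

lemma deriv_const_add_mul_sinh_comp_div_sqrt {u : ℝ → ℝ} {u' z : ℝ} (μ : ℝ) {ν : ℝ}
    (hν : 0 < ν) (hu : HasDerivAt u u' z) :
    deriv (fun z ↦ μ + ν * sinh (u z)) z / √((μ + ν * sinh (u z) - μ) ^ 2 + ν ^ 2) = u' := by
  rw [((hu.sinh.const_mul ν).const_add μ).deriv, add_sub_cancel_left,
    sqrt_mul_sinh_sq_add_sq hν.le]
  have : ν * cosh (u z) ≠ 0 := by positivity
  field_simp

lemma hasDerivAt_arsinh_sub_div {μ ν : ℝ} (hν : 0 < ν) (t : ℝ) :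
    HasDerivAt (fun x ↦ arsinh ((x - μ) / ν)) (1 / √((t - μ) ^ 2 + ν ^ 2)) t := by
  have hu : HasDerivAt (fun x ↦ (x - μ) / ν) (1 / ν) t := by
    simpa using ((hasDerivAt_id t).sub_const μ).div_const ν
  refine ((hasDerivAt_arsinh ((t - μ) / ν)).comp t hu).congr_deriv ?_
  rw [← cosh_arsinh]
  set s := arsinh ((t - μ) / ν) with hs
  have ht : t - μ = ν * sinh s := by
    rw [hs, sinh_arsinh]; field_simp
  rw [ht, sqrt_mul_sinh_sq_add_sq hν.le]
  have : cosh s ≠ 0 := (cosh_pos s).ne'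
  field_simp

lemma integral_one_div_sqrt_sub_sq_add_sq {μ ν : ℝ} (hν : 0 < ν) (α β : ℝ) :
    ∫ t in α..β, 1 / √((t - μ) ^ 2 + ν ^ 2) = arsinh ((β - μ) / ν) - arsinh ((α - μ) / ν) := by
  refine intervalIntegral.integral_eq_sub_of_hasDerivAt
    (fun t _ ↦ hasDerivAt_arsinh_sub_div hν t) (Continuous.intervalIntegrable ?_ α β)
  exact continuous_const.div (by fun_prop) fun t ↦ (sqrt_pos.2 (by positivity)).ne'

/-- With `a = arcsinh((1−μ)/ν)`, `b = arcsinh((1+μ)/ν)` and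
`g(t) = μ + ν·sinh((a+b)(t−1)/2 + a)`, the transplanted integrand of
`f_{μ,ν}(t) = 1/√((t−μ)²+ν²)` is constant: `g'(t)/√((g(t)−μ)²+ν²) = (a+b)/2`
for every real `t`; hence the one-point transplanted Gauss rule
`2·g'(t₁)·f_{μ,ν}(g(t₁))` equals `a+b`, the exact value of `∫_{−1}^{1} f_{μ,ν}`. -/
theorem transplanted_integrand_constant (μ ν : ℝ) (hν : 0 < ν)
    (a b : ℝ) (ha : a = Real.arsinh ((1 - μ) / ν)) (hb : b = Real.arsinh ((1 + μ) / ν))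
    (g : ℝ → ℝ) (hg : ∀ z : ℝ, g z = μ + ν * Real.sinh ((a + b) * (z - 1) / 2 + a)) :
    (∀ t : ℝ, deriv g t / Real.sqrt ((g t - μ) ^ 2 + ν ^ 2) = (a + b) / 2) ∧
    (∀ t₁ : ℝ, 2 * deriv g t₁ * (1 / Real.sqrt ((g t₁ - μ) ^ 2 + ν ^ 2)) = a + b) ∧
    (∫ t in (-1 : ℝ)..1, 1 / Real.sqrt ((t - μ) ^ 2 + ν ^ 2)) = a + b := by
  have constant : ∀ t, deriv g t / √((g t - μ) ^ 2 + ν ^ 2) = (a + b) / 2 := by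
    intro t
    have hu : HasDerivAt (fun z ↦ (a + b) * (z - 1) / 2 + a) ((a + b) / 2) t := by
      simpa using ((((hasDerivAt_id t).sub_const 1).const_mul (a + b)).div_const 2).add_const a
    obtain rfl : g = _ := funext hg
    exact deriv_const_add_mul_sinh_comp_div_sqrt μ hν hu
  refine ⟨constant, fun t₁ ↦ ?_, ?_⟩
  · rw [mul_assoc, mul_one_div, constant]
    ring
  · rw [integral_one_div_sqrt_sub_sq_add_sq hν, ha, hb, show (-1 - μ) / ν = -((1 + μ) / ν) by ring,
      arsinh_neg, sub_neg_eq_add]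
end

section
/- Let μ ∈ ℝ, ν > 0, a = arcsinh((1−μ)/ν), b = arcsinh((1+μ)/ν), θ(z) = (a+b)(z−1)/2 + a, and g(z) = μ + ν·sinh(θ(z)). Let k ≤ 1 be an integer and ψ : ℂ → ℂ an entire function. Then the function G(z) = ((a+b)/2)·ν^{1−k}·cosh(θ(z))^{1−k}·ψ(g(z)) is entire (complex-differentiable on all of ℂ), and for every real t it satisfies G(t) = g'(t)·((g(t)−μ)²+ν²)^{−k/2}·ψ(g(t)); that is, the transplanted integrand of f_{μ,ν}^k·ψ extends to an entire function when k ≤ 1. -/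
/-- Let `μ ∈ ℝ`, `ν > 0`, `a = arcsinh((1−μ)/ν)`, `b = arcsinh((1+μ)/ν)`,
`θ(z) = (a+b)(z−1)/2 + a`, `g(z) = μ + ν·sinh(θ(z))`. For any integer `k ≤ 1` and entire
`ψ : ℂ → ℂ`, the function `G(z) = ((a+b)/2)·ν^{1−k}·cosh(θ(z))^{1−k}·ψ(g(z))` is entire,
and for every real `t`, `G(t) = g'(t)·((g(t)−μ)²+ν²)^{−k/2}·ψ(g(t))`; i.e. the
transplanted integrand of `f_{μ,ν}^k·ψ` extends to an entire function when `k ≤ 1`. -/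
theorem transplanted_integrand_entire (μ ν : ℝ) (hν : 0 < ν)
    (a b : ℝ) (ha : a = Real.arsinh ((1 - μ) / ν)) (hb : b = Real.arsinh ((1 + μ) / ν))
    (θ : ℂ → ℂ) (hθ : ∀ z : ℂ, θ z = ((a : ℂ) + (b : ℂ)) * (z - 1) / 2 + (a : ℂ))
    (g : ℂ → ℂ) (hg : ∀ z : ℂ, g z = (μ : ℂ) + (ν : ℂ) * Complex.sinh (θ z))
    (gR : ℝ → ℝ) (hgR : ∀ t : ℝ, gR t = μ + ν * Real.sinh ((a + b) * (t - 1) / 2 + a))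
    (k : ℤ) (hk : k ≤ 1)
    (ψ : ℂ → ℂ) (hψ : Differentiable ℂ ψ)
    (G : ℂ → ℂ)
    (hG : ∀ z : ℂ, G z = (((a : ℂ) + (b : ℂ)) / 2) * (ν : ℂ) ^ (1 - k) *
      Complex.cosh (θ z) ^ (1 - k) * ψ (g z)) :
    Differentiable ℂ G ∧
      ∀ t : ℝ, G (t : ℂ) =
        ((deriv gR t : ℝ) : ℂ) *
          (((((gR t - μ) ^ 2 + ν ^ 2) ^ (-(k : ℝ) / 2) : ℝ)) : ℂ) * ψ ((gR t : ℝ) : ℂ) := by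
  obtain ⟨n, hn⟩ : ∃ n : ℕ, 1 - k = (n : ℤ) := ⟨(1 - k).toNat, (Int.toNat_of_nonneg (by omega)).symm⟩
  have hθd : Differentiable ℂ θ := by
    rw [funext hθ]; fun_prop
  have hgd : Differentiable ℂ g := by
    rw [funext hg]
    exact (differentiable_const _).add ((differentiable_const _).mul hθd.csinh)
  constructor
  · rw [funext hG]
    simp only [hn, zpow_natCast]
    exact ((differentiable_const _).mul (hθd.ccosh.pow n)).mul (hψ.comp hgd)
  · intro t
    obtain ⟨u, hu⟩ : ∃ u : ℝ, u = (a + b) * (t - 1) / 2 + a := ⟨_, rfl⟩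
    obtain ⟨c, hc⟩ : ∃ c : ℝ, c = ν * Real.cosh u := ⟨_, rfl⟩
    have hcoshpos : 0 < Real.cosh u := Real.cosh_pos u
    have hcpos : 0 < c := hc ▸ mul_pos hν hcoshpos
    have h1 : HasDerivAt (fun s : ℝ => (a + b) * (s - 1) / 2 + a) ((a + b) / 2) t := by
      have := ((((hasDerivAt_id t).sub_const 1).const_mul (a + b)).div_const 2).add_const a
      simpa using this
    have h2 : HasDerivAt gR (ν * (Real.cosh u * ((a + b) / 2))) t := by
      rw [hu]
      have h3 := ((h1.sinh).const_mul ν).const_add μ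
      exact h3.congr_of_eventuallyEq (Filter.Eventually.of_forall fun s => (hgR s))
    have hderiv : deriv gR t = ν * (Real.cosh u * ((a + b) / 2)) := h2.deriv
    have hsq : (gR t - μ) ^ 2 + ν ^ 2 = c ^ 2 := by
      have h4 : gR t - μ = ν * Real.sinh u := by rw [hgR t, hu]; ring
      rw [h4, hc, mul_pow, mul_pow, Real.cosh_sq']; ring
    have hrpow : ((gR t - μ) ^ 2 + ν ^ 2) ^ (-(k : ℝ) / 2) = c ^ (-k) := by
      rw [hsq, ← Real.rpow_natCast c 2, ← Real.rpow_mul hcpos.le]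
      have h5 : ((2 : ℕ) : ℝ) * (-(k : ℝ) / 2) = ((-k : ℤ) : ℝ) := by push_cast; ring
      rw [h5, Real.rpow_intCast]
    have hθt : θ (t : ℂ) = ((u : ℝ) : ℂ) := by rw [hθ, hu]; push_cast; ring
    have hgt : g (t : ℂ) = ((gR t : ℝ) : ℂ) := by
      rw [hg, hθt, hgR t, hu]; push_cast; ring
    have hνne : ((ν : ℝ) : ℂ) ≠ 0 := by exact_mod_cast hν.ne'
    have hXne : Complex.cosh ((u : ℝ) : ℂ) ≠ 0 := by
      rw [← Complex.ofReal_cosh]; exact_mod_cast hcoshpos.ne'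
    rw [hG, hθt, hgt, hderiv, hrpow]
    push_cast [hc]
    rw [show (1 - k) = 1 + (-k) by ring, zpow_add₀ hνne, zpow_one,
      zpow_add₀ hXne, zpow_one, mul_zpow]
    ring
end

section
/- For every x > 0, the point −1 + 2ix lies on the boundary of the Bernstein ellipse with parameter ρ₁(x) = ρ₀(x) + √(2x·ρ₀(x)), where ρ₀(x) = x + √(1+x²); that is, writing ρ = ρ₁(x), a_ρ = (ρ+ρ⁻¹)/2 and b_ρ = (ρ−ρ⁻¹)/2, one has 1/a_ρ² + 4x²/b_ρ² = 1. (Equivalently, b_ρ² = 2x·ρ₀(x), which follows from the identity ρ₀(x)² = 1 + 2x·ρ₀(x).) -/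
/-- For every `x > 0`, the point `−1 + 2ix` lies on the boundary of the
Bernstein ellipse with parameter `ρ₁(x) = ρ₀(x) + √(2x·ρ₀(x))`, where
`ρ₀(x) = x + √(1+x²)`: writing `ρ = ρ₁(x)`, `a_ρ = (ρ+ρ⁻¹)/2`, `b_ρ = (ρ−ρ⁻¹)/2`,
one has `1/a_ρ² + 4x²/b_ρ² = 1`; equivalently `b_ρ² = 2x·ρ₀(x)`, which follows from
the identity `ρ₀(x)² = 1 + 2x·ρ₀(x)`. -/
theorem shifted_point_on_bernstein_ellipse (x : ℝ) (hx : 0 < x)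
    (ρ₀ ρ : ℝ) (hρ₀ : ρ₀ = x + Real.sqrt (1 + x ^ 2))
    (hρ : ρ = ρ₀ + Real.sqrt (2 * x * ρ₀))
    (aρ bρ : ℝ) (haρ : aρ = (ρ + ρ⁻¹) / 2) (hbρ : bρ = (ρ - ρ⁻¹) / 2) :
    1 / aρ ^ 2 + 4 * x ^ 2 / bρ ^ 2 = 1 ∧
    bρ ^ 2 = 2 * x * ρ₀ ∧
    ρ₀ ^ 2 = 1 + 2 * x * ρ₀ := by
  have hs : Real.sqrt (1 + x ^ 2) ^ 2 = 1 + x ^ 2 := Real.sq_sqrt (by positivity)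
  have hsn : 0 ≤ Real.sqrt (1 + x ^ 2) := Real.sqrt_nonneg _
  have hρ₀pos : 0 < ρ₀ := by rw [hρ₀]; linarith
  have hρ₀sq : ρ₀ ^ 2 = 1 + 2 * x * ρ₀ := by rw [hρ₀]; nlinarith [hs]
  set t := Real.sqrt (2 * x * ρ₀) with htdef
  have ht : t ^ 2 = 2 * x * ρ₀ := Real.sq_sqrt (by positivity)
  have htn : 0 ≤ t := Real.sqrt_nonneg _
  have hρpos : 0 < ρ := by rw [hρ]; linarith
  have hmul : ρ * (ρ₀ - t) = 1 := by rw [hρ]; nlinarith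
  have hinv : ρ⁻¹ = ρ₀ - t := inv_eq_of_mul_eq_one_right hmul
  have hb : bρ = t := by rw [hbρ, hinv, hρ]; ring
  have ha : aρ = ρ₀ := by rw [haρ, hinv, hρ]; ring
  have htpos : 0 < t := Real.sqrt_pos.mpr (by positivity)
  refine ⟨?_, by rw [hb, ht], hρ₀sq⟩
  rw [ha, hb]
  field_simp
  nlinarith [ht, hρ₀sq]
end

section
/- Let ν > 0, α = arcsinh(1/ν), C = (π/2)/α, and ρ = ρ₀(C) = C + √(1+C²). Then cosh(α·z) ≠ 0 for every z in the open Bernstein ellipse E°_ρ = {u+iv ∈ ℂ : u²/a_ρ² + v²/b_ρ² < 1}, where a_ρ = (ρ+ρ⁻¹)/2 and b_ρ = (ρ−ρ⁻¹)/2. (This is the statement that for μ = 0 the transplanted integrand is analytic in the Bernstein ellipse of parameter ρ₀(C_{2ν}) appearing in part (1) of the paper's main theorem.) -/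
/-!
A zero of `cosh w` has `cos w.im = 0`, because `Re (cosh w) = cosh w.re * cos w.im`; so no
zero of `z ↦ cosh (α z)` lies in the strip `|Im z| < (π/2)/α = C`. The choice `ρ = C + √(1 + C²)`
makes the semi-minor axis `(ρ - ρ⁻¹)/2` of the Bernstein ellipse exactly `C`, so the open
ellipse lies in the strip `|Im z| < C`.
-/

open Real

theorem Complex.cosh_re (w : ℂ) : (Complex.cosh w).re = Real.cosh w.re * Real.cos w.im := by
  conv_lhs => rw [← Complex.re_add_im w]
  rw [Complex.cosh_add, Complex.cosh_mul_I, Complex.sinh_mul_I]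
  simp [Complex.cosh_ofReal_re, Complex.cos_ofReal_re]

theorem Complex.cosh_ne_zero_of_abs_im_lt {w : ℂ} (h : |w.im| < π / 2) :
    Complex.cosh w ≠ 0 := by
  have hre : 0 < (Complex.cosh w).re := by
    rw [Complex.cosh_re]
    exact mul_pos (Real.cosh_pos _) (Real.cos_pos_of_mem_Ioo (abs_lt.mp h))
  intro h0
  simp [h0] at hre

theorem inv_add_sqrt_one_add_sq (x : ℝ) : (x + √(1 + x ^ 2))⁻¹ = √(1 + x ^ 2) - x := by
  have hs : √(1 + x ^ 2) ^ 2 = 1 + x ^ 2 := Real.sq_sqrt (by positivity)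
  apply inv_eq_of_mul_eq_one_right
  linear_combination hs

theorem abs_im_lt_of_re_sq_div_add_im_sq_div_lt_one {a b : ℝ} (hb : 0 < b) {z : ℂ}
    (hz : z.re ^ 2 / a ^ 2 + z.im ^ 2 / b ^ 2 < 1) : |z.im| < b := by
  have him : z.im ^ 2 / b ^ 2 < 1 := by
    have : 0 ≤ z.re ^ 2 / a ^ 2 := by positivity
    linarith
  rw [div_lt_one (by positivity)] at him
  exact abs_lt_of_sq_lt_sq him hb.le

theorem transplanted_denominator_nonzero_center_general (ν : ℝ) (hν : 0 < ν)
    (α C ρ : ℝ) (hα : α = Real.arsinh (1 / ν)) (hC : C = (Real.pi / 2) / α)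
    (hρ : ρ = C + Real.sqrt (1 + C ^ 2))
    (aρ bρ : ℝ) (hbρ : bρ = (ρ - ρ⁻¹) / 2) :
    ∀ z : ℂ, z.re ^ 2 / aρ ^ 2 + z.im ^ 2 / bρ ^ 2 < 1 →
      Complex.cosh ((α : ℂ) * z) ≠ 0 := by
  intro z hz
  have hα_pos : 0 < α := hα ▸ Real.arsinh_pos_iff.mpr (by positivity)
  have hC_pos : 0 < C := hC ▸ by positivity
  have hb : bρ = C := by
    rw [hbρ, hρ, inv_add_sqrt_one_add_sq]
    ring
  have him : |z.im| < C := abs_im_lt_of_re_sq_div_add_im_sq_div_lt_one (hb ▸ hC_pos) (hb ▸ hz)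
  apply Complex.cosh_ne_zero_of_abs_im_lt
  calc |((α : ℂ) * z).im| = α * |z.im| := by
        rw [Complex.im_ofReal_mul, abs_mul, abs_of_pos hα_pos]
    _ < α * C := mul_lt_mul_of_pos_left him hα_pos
    _ = π / 2 := by rw [hC]; field_simp

/-- Let `ν > 0`, `α = arcsinh(1/ν)`, `C = (π/2)/α`, and
`ρ = ρ₀(C) = C + √(1+C²)`. Then `cosh(α·z) ≠ 0` for every `z` in the open Bernstein
ellipse `E°_ρ = {u+iv : u²/a_ρ² + v²/b_ρ² < 1}` with `a_ρ = (ρ+ρ⁻¹)/2`,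
`b_ρ = (ρ−ρ⁻¹)/2`: for `μ = 0` the transplanted integrand is analytic in the
Bernstein ellipse of parameter `ρ₀(C_{2ν})`. -/
theorem transplanted_denominator_nonzero_center (ν : ℝ) (hν : 0 < ν)
    (α C ρ : ℝ) (hα : α = Real.arsinh (1 / ν)) (hC : C = (Real.pi / 2) / α)
    (hρ : ρ = C + Real.sqrt (1 + C ^ 2))
    (aρ bρ : ℝ) (haρ : aρ = (ρ + ρ⁻¹) / 2) (hbρ : bρ = (ρ - ρ⁻¹) / 2) :
    ∀ z : ℂ, z.re ^ 2 / aρ ^ 2 + z.im ^ 2 / bρ ^ 2 < 1 →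
      Complex.cosh ((α : ℂ) * z) ≠ 0 :=
  transplanted_denominator_nonzero_center_general ν hν α C ρ hα hC hρ aρ bρ hbρ
end

section
/- Let ν > 0, a = arcsinh(2/ν), C = π/(2a), and ρ = ρ₁(C) = ρ₀(C) + √(2C·ρ₀(C)) with ρ₀(C) = C + √(1+C²). Then cosh(a(z+1)/2) ≠ 0 for every z in the open Bernstein ellipse E°_ρ = {u+iv ∈ ℂ : u²/a_ρ² + v²/b_ρ² < 1}, where a_ρ = (ρ+ρ⁻¹)/2 and b_ρ = (ρ−ρ⁻¹)/2. (This is the statement that for μ = −1 the transplanted integrand is analytic in the Bernstein ellipse of parameter ρ₁(C_ν) appearing in part (1) of the paper's main theorem.) -/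
/-!
The zeros of `cosh (a (z + 1) / 2)` are the points `z = -1 + (2k + 1) (π / a) i = -1 + (2k + 1) 2C i`,
all of which have `|Re z| = 1` and `|Im z| ≥ 2C`. Writing `ρ₀ = ρ₀(C)`, so that `ρ₀² = 1 + 2Cρ₀`, the
parameter `ρ = ρ₀ + √(2Cρ₀)` satisfies `ρ⁻¹ = ρ₀ - √(2Cρ₀)`; hence the ellipse `E_ρ` has semi-axes
`ρ₀` and `√(2Cρ₀)` and its boundary passes through `±1 ± 2Ci`. So no zero lies inside it.
-/

open Real

theorem Complex.cosh_eq_zero_iff {w : ℂ} :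
    Complex.cosh w = 0 ↔ ∃ k : ℤ, w = (2 * k + 1) * π / 2 * Complex.I := by
  rw [← Complex.cos_mul_I, Complex.cos_eq_zero_iff]
  constructor
  · rintro ⟨k, hk⟩
    refine ⟨-k - 1, ?_⟩
    push_cast
    linear_combination (-Complex.I) * hk + w * Complex.I_sq
  · rintro ⟨k, rfl⟩
    exact ⟨-k - 1, by push_cast; linear_combination (2 * k + 1) * π / 2 * Complex.I_sq⟩

theorem one_le_sq_two_mul_add_one (k : ℤ) : (1 : ℝ) ≤ (2 * k + 1) ^ 2 := by
  rcases le_or_gt 0 k with hk | hk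
  · have : (0 : ℝ) ≤ k := by exact_mod_cast hk
    nlinarith
  · have : (k : ℝ) ≤ -1 := by exact_mod_cast Int.le_sub_one_of_lt hk
    nlinarith

theorem sq_add_sqrt_one_add_sq (C : ℝ) :
    (C + √(1 + C ^ 2)) ^ 2 = 1 + 2 * C * (C + √(1 + C ^ 2)) := by
  linear_combination Real.sq_sqrt (by positivity : (0 : ℝ) ≤ 1 + C ^ 2)

theorem inv_add_eq_sub_of_sq_sub_sq_eq_one {K : Type*} [Field K] {t s : K}
    (h : t ^ 2 - s ^ 2 = 1) : (t + s)⁻¹ = t - s :=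
  inv_eq_of_mul_eq_one_right (by linear_combination h)

/-- The Bernstein ellipse of semi-axes `ρ₀` and `√(2Cρ₀)` has `±1 ± 2Ci` on its boundary. -/
theorem one_le_sq_div_add_sq_div_of_sq_eq_one {C ρ₀ x y : ℝ} (hC : 0 < C) (hρ₀ : 0 < ρ₀)
    (hρ₀sq : ρ₀ ^ 2 = 1 + 2 * C * ρ₀) (hx : x ^ 2 = 1) (hy : (2 * C) ^ 2 ≤ y ^ 2) :
    1 ≤ x ^ 2 / ρ₀ ^ 2 + y ^ 2 / (2 * C * ρ₀) := by
  have hy' : 2 * C / ρ₀ ≤ y ^ 2 / (2 * C * ρ₀) := by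
    rw [div_le_div_iff₀ hρ₀ (by positivity)]
    nlinarith
  have hboundary : 1 / ρ₀ ^ 2 + 2 * C / ρ₀ = 1 := by
    field_simp
    linear_combination -hρ₀sq
  rw [hx]
  linarith

/-- Let `ν > 0`, `a = arcsinh(2/ν)`, `C = π/(2a)`, and
`ρ = ρ₁(C) = ρ₀(C) + √(2C·ρ₀(C))` with `ρ₀(C) = C + √(1+C²)`. Then
`cosh(a(z+1)/2) ≠ 0` for every `z` in the open Bernstein ellipse
`E°_ρ = {u+iv : u²/a_ρ² + v²/b_ρ² < 1}` with `a_ρ = (ρ+ρ⁻¹)/2`, `b_ρ = (ρ−ρ⁻¹)/2`: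
for `μ = −1` the transplanted integrand is analytic in the Bernstein ellipse of
parameter `ρ₁(C_ν)`. -/
theorem transplanted_denominator_nonzero_corner (ν : ℝ) (hν : 0 < ν)
    (a C ρ₀ ρ : ℝ) (ha : a = Real.arsinh (2 / ν)) (hC : C = Real.pi / (2 * a))
    (hρ₀ : ρ₀ = C + Real.sqrt (1 + C ^ 2))
    (hρ : ρ = ρ₀ + Real.sqrt (2 * C * ρ₀))
    (aρ bρ : ℝ) (haρ : aρ = (ρ + ρ⁻¹) / 2) (hbρ : bρ = (ρ - ρ⁻¹) / 2) :
    ∀ z : ℂ, z.re ^ 2 / aρ ^ 2 + z.im ^ 2 / bρ ^ 2 < 1 →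
      Complex.cosh ((a : ℂ) * (z + 1) / 2) ≠ 0 := by
  intro z hz hcosh
  have ha_pos : 0 < a := ha ▸ Real.arsinh_pos_iff.mpr (by positivity)
  have hC_pos : 0 < C := hC ▸ by positivity
  have hρ₀_pos : 0 < ρ₀ := hρ₀ ▸ by positivity
  have hρ₀sq : ρ₀ ^ 2 = 1 + 2 * C * ρ₀ := hρ₀ ▸ sq_add_sqrt_one_add_sq C
  have hs : √(2 * C * ρ₀) ^ 2 = 2 * C * ρ₀ := Real.sq_sqrt (by positivity)
  have hρ_inv : ρ⁻¹ = ρ₀ - √(2 * C * ρ₀) :=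
    hρ ▸ inv_add_eq_sub_of_sq_sub_sq_eq_one (by linear_combination hρ₀sq - hs)
  have haρ_eq : aρ ^ 2 = ρ₀ ^ 2 := by rw [haρ, hρ_inv, hρ]; ring
  have hbρ_eq : bρ ^ 2 = 2 * C * ρ₀ := by rw [hbρ, hρ_inv, hρ]; linear_combination hs
  obtain ⟨k, hk⟩ := Complex.cosh_eq_zero_iff.mp hcosh
  have hz_eq : z = -1 + ((2 * k + 1) * (2 * C) : ℝ) * Complex.I := by
    have : (a : ℂ) ≠ 0 := by exact_mod_cast ha_pos.ne'
    rw [hC]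
    push_cast
    field_simp
    linear_combination 2 * hk
  have hre : z.re ^ 2 = 1 := by simp [hz_eq]
  have him : (2 * C) ^ 2 ≤ z.im ^ 2 := by
    have : z.im = (2 * k + 1) * (2 * C) := by simp [hz_eq]
    rw [this]
    nlinarith [one_le_sq_two_mul_add_one k, sq_nonneg C]
  have h_outside := one_le_sq_div_add_sq_div_of_sq_eq_one hC_pos hρ₀_pos hρ₀sq hre him
  rw [haρ_eq, hbρ_eq] at hz
  linarith
end

section
/- For every h > 0 and every y > 0, h²·∫_h^∞ du / (u³·√(y² + u²)) = (y·√(y² + h²) − h²·arcsinh(y/h)) / (2y³). -/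
open MeasureTheory

/-! The integrand has the explicit primitive
`F(u) = -√(y² + u²) / (2y²u²) + arsinh(y/u) / (2y³)`, which is increasing on `(0, ∞)` and tends
to `0` at infinity, so the integral over `(h, ∞)` equals `-F(h)` by the fundamental theorem of
calculus for improper integrals with nonnegative integrand. -/

open Filter Real

noncomputable section

def depthKernelPrimitive (y u : ℝ) : ℝ :=
  -√(y ^ 2 + u ^ 2) / (2 * y ^ 2 * u ^ 2) + arsinh (y / u) / (2 * y ^ 3)

lemma sqrt_one_add_div_sq {y u : ℝ} (hu : 0 < u) :
    √(1 + (y / u) ^ 2) = √(y ^ 2 + u ^ 2) / u := by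
  rw [show 1 + (y / u) ^ 2 = (y ^ 2 + u ^ 2) / u ^ 2 by field_simp; ring,
    sqrt_div (by positivity), sqrt_sq hu.le]

lemma hasDerivAt_depthKernelPrimitive {y u : ℝ} (hy : y ≠ 0) (hu : 0 < u) :
    HasDerivAt (depthKernelPrimitive y) (1 / (u ^ 3 * √(y ^ 2 + u ^ 2))) u := by
  have hs : 0 < y ^ 2 + u ^ 2 := by positivity
  have hsqrt : HasDerivAt (fun u => √(y ^ 2 + u ^ 2)) (2 * u / (2 * √(y ^ 2 + u ^ 2))) u :=
    ((hasDerivAt_pow 2 u).const_add (y ^ 2)).sqrt hs.ne' |>.congr_deriv (by ring)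
  have hden : HasDerivAt (fun u => 2 * y ^ 2 * u ^ 2) (2 * y ^ 2 * (2 * u)) u := by
    simpa using (hasDerivAt_pow 2 u).const_mul (2 * y ^ 2)
  have hquot : HasDerivAt (fun u => y / u) (-y / u ^ 2) u := by
    simpa [div_eq_mul_inv, neg_div] using (hasDerivAt_inv hu.ne').const_mul y
  have harsinh := ((hasDerivAt_arsinh (y / u)).comp u hquot).div_const (2 * y ^ 3)
  refine (hsqrt.neg.div hden (by positivity)).add harsinh |>.congr_deriv ?_
  rw [sqrt_one_add_div_sq hu]
  simp only [Pi.neg_apply]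
  have hsq : √(y ^ 2 + u ^ 2) ^ 2 = y ^ 2 + u ^ 2 := sq_sqrt hs.le
  have : 0 < √(y ^ 2 + u ^ 2) := sqrt_pos.2 hs
  field_simp
  linear_combination 2 * hsq

lemma tendsto_sqrt_sq_add_sq_div_sq_atTop (y : ℝ) :
    Tendsto (fun u => √(y ^ 2 + u ^ 2) / u ^ 2) atTop (nhds 0) := by
  have hlim : Tendsto (fun u : ℝ => √(y ^ 2 * (u⁻¹) ^ 4 + (u⁻¹) ^ 2)) atTop (nhds 0) := by
    simpa using (((tendsto_inv_atTop_zero.pow 4).const_mul (y ^ 2)).add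
      (tendsto_inv_atTop_zero.pow 2)).sqrt
  refine hlim.congr' ?_
  filter_upwards [eventually_gt_atTop 0] with u hu
  rw [show y ^ 2 * (u⁻¹) ^ 4 + (u⁻¹) ^ 2 = (y ^ 2 + u ^ 2) / (u ^ 2) ^ 2 by field_simp,
    sqrt_div (by positivity), sqrt_sq (by positivity)]

lemma tendsto_depthKernelPrimitive_atTop (y : ℝ) :
    Tendsto (depthKernelPrimitive y) atTop (nhds 0) := by
  have harsinh : Tendsto (fun u => arsinh (y / u)) atTop (nhds 0) :=
    (continuous_arsinh.tendsto' 0 0 arsinh_zero).comp (tendsto_const_nhds.div_atTop tendsto_id)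
  convert ((tendsto_sqrt_sq_add_sq_div_sq_atTop y).div_const (2 * y ^ 2)).neg.add
    (harsinh.div_const (2 * y ^ 3)) using 2 with u
  · unfold depthKernelPrimitive
    ring
  · simp

end

/-- For every `h > 0` and every `y > 0`,
`h²·∫_h^∞ du/(u³·√(y²+u²)) = (y·√(y²+h²) − h²·arcsinh(y/h))/(2y³)`. -/
theorem depth_integral_order_zero (h y : ℝ) (hh : 0 < h) (hy : 0 < y) :
    h ^ 2 * ∫ u in Set.Ioi h, 1 / (u ^ 3 * Real.sqrt (y ^ 2 + u ^ 2)) =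
      (y * Real.sqrt (y ^ 2 + h ^ 2) - h ^ 2 * Real.arsinh (y / h)) / (2 * y ^ 3) := by
  have hderiv : ∀ u ∈ Set.Ioi h,
      HasDerivAt (depthKernelPrimitive y) (1 / (u ^ 3 * √(y ^ 2 + u ^ 2))) u :=
    fun u hu => hasDerivAt_depthKernelPrimitive hy.ne' (hh.trans hu)
  have hnonneg : ∀ u ∈ Set.Ioi h, 0 ≤ 1 / (u ^ 3 * √(y ^ 2 + u ^ 2)) := fun u hu => by
    have := hh.trans hu
    positivity
  rw [integral_Ioi_of_hasDerivAt_of_nonneg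
    (hasDerivAt_depthKernelPrimitive hy.ne' hh).continuousAt.continuousWithinAt hderiv hnonneg
    (tendsto_depthKernelPrimitive_atTop y), depthKernelPrimitive]
  field_simp
  ring
end

section
/- Let J : ℝ² → ℝ³ be an injective linear map, h > 0, and x̂₀ = (x̂₀₁, x̂₀₂) ∈ ℝ² a point not lying on any of the three lines x₂ = 0, x₁ + x₂ = 1, x₁ = 0 containing the edges of the reference triangle T̂. Then ∫_{T̂} dA(x̂) / √(|J(x̂ − x̂₀)|² + h²) = Σ_{j=1}^{3} ŝ_j·∫_{−1}^{1} [(√(|J r_j(t)|² + h²) − h) / |J r_j(t)|²]·|r_j'| dt, where r_j, |r_j'|, and ŝ_j are the edge parametrizations, constant speeds, and signed distances associated with the shifted triangle T̂ − x̂₀. -/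
/-!
Writing `Q(w) = ‖J w‖²`, a positive semidefinite quadratic form, the vector field
`G(w) = w / (√(Q(w) + h²) + h)` satisfies `div G = 1 / √(Q(w) + h²)`: this is Euler's identity
`w · ∇Q = 2 Q` combined with `Q = (√(Q + h²) - h)(√(Q + h²) + h)`. By the divergence theorem on
the shifted triangle, the area integral is the flux of `G` through the three edges, and on the
`j`-th edge `w · n = ŝⱼ` is constant, so the flux is `ŝⱼ ∫ (√(Q + h²) + h)⁻¹ ds`. Off the origin
`(√(Q + h²) + h)⁻¹ = (√(Q + h²) - h) / Q`, which is the integrand of the statement; the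
divergence theorem itself is proved on the reference triangle by slicing and the fundamental
theorem of calculus.
-/

open MeasureTheory Real

namespace NearSingular

theorem sqrt_add_sq_sub_div_eq_inv {Q h : ℝ} (hQ : 0 < Q) (hh : 0 ≤ h) :
    (√(Q + h ^ 2) - h) / Q = (√(Q + h ^ 2) + h)⁻¹ := by
  have hS : √(Q + h ^ 2) ^ 2 = Q + h ^ 2 := sq_sqrt (by positivity)
  have hpos : 0 < √(Q + h ^ 2) + h := by positivity
  field_simp
  linear_combination hS

def quad (a b c u v : ℝ) : ℝ := a * u ^ 2 + 2 * b * u * v + c * v ^ 2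

theorem quad_swap (a b c u v : ℝ) : quad c b a v u = quad a b c u v := by
  unfold quad; ring

noncomputable def kernel (a b c h u v : ℝ) : ℝ := (√(quad a b c u v + h ^ 2) + h)⁻¹

theorem kernel_swap (a b c h u v : ℝ) : kernel c b a h v u = kernel a b c h u v := by
  rw [kernel, kernel, quad_swap]

noncomputable def fluxDeriv (a b c h u v : ℝ) : ℝ :=
  kernel a b c h u v -
    u * (a * u + b * v) / (√(quad a b c u v + h ^ 2) * (√(quad a b c u v + h ^ 2) + h) ^ 2)

variable {a b c h : ℝ}

theorem sqrt_quad_add_sq_pos (hh : 0 < h) (hQ : ∀ u v, 0 ≤ quad a b c u v) (u v : ℝ) :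
    0 < √(quad a b c u v + h ^ 2) :=
  sqrt_pos.2 (by have := hQ u v; positivity)

theorem hasDerivAt_mul_kernel (hh : 0 < h) (hQ : ∀ u v, 0 ≤ quad a b c u v) (u v : ℝ) :
    HasDerivAt (fun u => u * kernel a b c h u v) (fluxDeriv a b c h u v) u := by
  have hS := sqrt_quad_add_sq_pos hh hQ u v
  have hquad : HasDerivAt (fun u => quad a b c u v + h ^ 2) (2 * (a * u + b * v)) u := by
    unfold quad
    refine (((((hasDerivAt_id' u).pow 2).const_mul a).add
      (((hasDerivAt_id' u).const_mul (2 * b)).mul_const v)).add_const (c * v ^ 2)).add_const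
      (h ^ 2) |>.congr_deriv ?_
    norm_num
    ring
  have hK := ((hquad.sqrt (by have := hQ u v; positivity)).add_const h).inv (by positivity)
  refine ((hasDerivAt_id' u).mul hK).congr_deriv ?_
  simp only [fluxDeriv, kernel, Pi.inv_apply]
  field_simp
  ring

theorem fluxDeriv_add_fluxDeriv_swap (hh : 0 < h) (hQ : ∀ u v, 0 ≤ quad a b c u v) (u v : ℝ) :
    fluxDeriv a b c h u v + fluxDeriv c b a h v u = (√(quad a b c u v + h ^ 2))⁻¹ := by
  have hS := sqrt_quad_add_sq_pos hh hQ u v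
  have hS2 : √(quad a b c u v + h ^ 2) ^ 2 = quad a b c u v + h ^ 2 :=
    sq_sqrt (by have := hQ u v; positivity)
  simp only [fluxDeriv, quad_swap, kernel]
  field_simp
  unfold quad at hS2 ⊢
  linear_combination hS2

@[fun_prop]
theorem continuous_kernel {X : Type*} [TopologicalSpace X] (hh : 0 < h) {f g : X → ℝ}
    (hf : Continuous f) (hg : Continuous g) :
    Continuous fun x => kernel a b c h (f x) (g x) := by
  unfold NearSingular.kernel quad
  exact Continuous.inv₀ (by fun_prop) fun x => by positivity

@[fun_prop]
theorem continuous_fluxDeriv {X : Type*} [TopologicalSpace X] (hh : 0 < h)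
    (hQ : ∀ u v, 0 ≤ quad a b c u v) {f g : X → ℝ} (hf : Continuous f) (hg : Continuous g) :
    Continuous fun x => fluxDeriv a b c h (f x) (g x) := by
  have hS : Continuous fun x => √(quad a b c (f x) (g x) + h ^ 2) := by unfold quad; fun_prop
  unfold NearSingular.fluxDeriv
  refine (continuous_kernel hh hf hg).sub (Continuous.div (by fun_prop) (by fun_prop) fun x => ?_)
  have := sqrt_quad_add_sq_pos hh hQ (f x) (g x)
  positivity

def refTriangle : Set (ℝ × ℝ) := {z | 0 ≤ z.1 ∧ 0 ≤ z.2 ∧ z.1 + z.2 ≤ 1}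

theorem isCompact_refTriangle : IsCompact refTriangle := by
  refine (isCompact_Icc (a := (0, 0)) (b := (1, 1))).of_isClosed_subset ?_ ?_
  · exact (isClosed_le continuous_const continuous_fst).inter
      ((isClosed_le continuous_const continuous_snd).inter
        (isClosed_le (continuous_fst.add continuous_snd) continuous_const))
  · rintro ⟨x, y⟩ ⟨hx, hy, hxy⟩
    exact ⟨⟨hx, hy⟩, by constructor <;> dsimp <;> linarith⟩

theorem measurableSet_refTriangle : MeasurableSet refTriangle :=
  isCompact_refTriangle.measurableSet

theorem mem_refTriangle_iff (x y : ℝ) :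
    (x, y) ∈ refTriangle ↔ y ∈ Set.Icc (0 : ℝ) 1 ∧ x ∈ Set.Icc 0 (1 - y) := by
  simp only [refTriangle, Set.mem_ofPred_eq, Set.mem_Icc]
  constructor
  · rintro ⟨hx, hy, hxy⟩; exact ⟨⟨hy, by linarith⟩, hx, by linarith⟩
  · rintro ⟨⟨hy, -⟩, hx, hxy⟩; exact ⟨hx, hy, by linarith⟩

theorem setIntegral_refTriangle_eq_iterated {f : ℝ × ℝ → ℝ} (hf : Continuous f) :
    ∫ z in refTriangle, f z = ∫ y in (0 : ℝ)..1, ∫ x in (0 : ℝ)..1 - y, f (x, y) := by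
  have hint : Integrable (refTriangle.indicator f) (volume.prod volume) :=
    (integrable_indicator_iff measurableSet_refTriangle).2
      (hf.continuousOn.integrableOn_compact isCompact_refTriangle)
  have hslice : ∀ y, ∫ x, refTriangle.indicator f (x, y) =
      (Set.Icc (0 : ℝ) 1).indicator (fun y => ∫ x in Set.Icc 0 (1 - y), f (x, y)) y := by
    intro y
    by_cases hy : y ∈ Set.Icc (0 : ℝ) 1
    · rw [Set.indicator_of_mem hy, ← integral_indicator measurableSet_Icc]
      congr 1 with x
      simp only [Set.indicator, mem_refTriangle_iff, hy, true_and]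
    · simp [Set.indicator, mem_refTriangle_iff, hy]
  rw [← integral_indicator measurableSet_refTriangle, Measure.volume_eq_prod,
    integral_prod_symm _ hint]
  simp only [hslice]
  rw [integral_indicator measurableSet_Icc, integral_Icc_eq_integral_Ioc,
    ← intervalIntegral.integral_of_le zero_le_one]
  refine intervalIntegral.integral_congr fun y hy => ?_
  rw [Set.uIcc_of_le zero_le_one] at hy
  simp only [integral_Icc_eq_integral_Ioc,
    ← intervalIntegral.integral_of_le (show (0 : ℝ) ≤ 1 - y by linarith [hy.2])]

theorem setIntegral_refTriangle_swap (f : ℝ × ℝ → ℝ) :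
    ∫ z in refTriangle, f z.swap = ∫ z in refTriangle, f z := by
  have hpre : Prod.swap ⁻¹' refTriangle = refTriangle := by
    ext ⟨x, y⟩
    simp only [refTriangle, Set.mem_preimage, Set.mem_ofPred_eq, Prod.swap_prod_mk, add_comm y x]
    tauto
  rw [Measure.volume_eq_prod, ← Measure.measurePreserving_swap.setIntegral_preimage_emb
    MeasurableEquiv.prodComm.measurableEmbedding, hpre]
  rfl

theorem setIntegral_refTriangle_partialDeriv {P P' : ℝ × ℝ → ℝ}
    (hP : ∀ x y, HasDerivAt (fun x => P (x, y)) (P' (x, y)) x) (hP' : Continuous P') :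
    ∫ z in refTriangle, P' z = ∫ y in (0 : ℝ)..1, (P (1 - y, y) - P (0, y)) := by
  rw [setIntegral_refTriangle_eq_iterated hP']
  refine intervalIntegral.integral_congr fun y _ => ?_
  exact intervalIntegral.integral_eq_sub_of_hasDerivAt (fun x _ => hP x y)
    ((hP'.comp (Continuous.prodMk_left y)).intervalIntegrable _ _)

theorem setIntegral_refTriangle_divergence {P V P' V' : ℝ × ℝ → ℝ}
    (hP : ∀ x y, HasDerivAt (fun x => P (x, y)) (P' (x, y)) x)
    (hV : ∀ x y, HasDerivAt (fun y => V (x, y)) (V' (x, y)) y)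
    (hP' : Continuous P') (hV' : Continuous V') :
    ∫ z in refTriangle, (P' z + V' z) =
      (∫ t in (0 : ℝ)..1, (P (1 - t, t) - P (0, t))) +
        ∫ t in (0 : ℝ)..1, (V (t, 1 - t) - V (t, 0)) := by
  rw [integral_add (hP'.continuousOn.integrableOn_compact isCompact_refTriangle)
    (hV'.continuousOn.integrableOn_compact isCompact_refTriangle),
    setIntegral_refTriangle_partialDeriv hP hP', ← setIntegral_refTriangle_swap V',
    setIntegral_refTriangle_partialDeriv (P := fun z => V z.swap) (P' := fun z => V' z.swap)
      (fun x y => hV y x) (hV'.comp continuous_swap)]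
  rfl

theorem integral_comp_one_sub (f : ℝ → ℝ) :
    ∫ t in (0 : ℝ)..1, f (1 - t) = ∫ t in (0 : ℝ)..1, f t := by
  simp [intervalIntegral.integral_comp_sub_left]

theorem integral_comp_half_add_half (f : ℝ → ℝ) :
    ∫ t in (-1 : ℝ)..1, f ((t + 1) / 2) = 2 * ∫ u in (0 : ℝ)..1, f u := by
  simp only [add_div]
  rw [intervalIntegral.integral_comp_div_add f two_ne_zero]
  norm_num

theorem setIntegral_refTriangle_inv_sqrt (hh : 0 < h) (hQ : ∀ u v, 0 ≤ quad a b c u v) (p q : ℝ) :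
    ∫ z in refTriangle, (√(quad a b c (z.1 - p) (z.2 - q) + h ^ 2))⁻¹ =
      q * (∫ u in (0 : ℝ)..1, kernel a b c h (-p + u) (-q)) +
        (1 - p - q) * (∫ u in (0 : ℝ)..1, kernel a b c h (1 - p - u) (-q + u)) +
          p * ∫ u in (0 : ℝ)..1, kernel a b c h (-p) (1 - q - u) := by
  have hQ' : ∀ u v, 0 ≤ quad c b a u v := fun u v => quad_swap a b c v u ▸ hQ v u
  have hdiv := setIntegral_refTriangle_divergence
    (P := fun z => (z.1 - p) * kernel a b c h (z.1 - p) (z.2 - q))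
    -- `v K(u, v)` is the first component of the field for the swapped form `(c, b, a)`
    (V := fun z => (z.2 - q) * kernel c b a h (z.2 - q) (z.1 - p))
    (P' := fun z => fluxDeriv a b c h (z.1 - p) (z.2 - q))
    (V' := fun z => fluxDeriv c b a h (z.2 - q) (z.1 - p))
    (fun x y => (hasDerivAt_mul_kernel hh hQ (x - p) (y - q)).comp_sub_const x p)
    (fun x y => (hasDerivAt_mul_kernel hh hQ' (y - q) (x - p)).comp_sub_const y q)
    (by fun_prop (disch := assumption)) (by fun_prop (disch := assumption))
  simp only [fluxDeriv_add_fluxDeriv_swap hh hQ, kernel_swap] at hdiv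
  -- `t ↦ 1 - t` on the hypotenuse and on the edge `x = 0` aligns all edge parametrizations
  rw [hdiv, ← integral_comp_one_sub (fun u => kernel a b c h (1 - p - u) (-q + u)),
    ← integral_comp_one_sub (fun t => (1 - t - p) * kernel a b c h (1 - t - p) (t - q) -
      (0 - p) * kernel a b c h (0 - p) (t - q))]
  have integrable01 : ∀ {f : ℝ → ℝ}, Continuous f → IntervalIntegrable f volume 0 1 :=
    fun hf => hf.intervalIntegrable 0 1
  rw [← intervalIntegral.integral_add (integrable01 (by fun_prop (disch := assumption)))
    (integrable01 (by fun_prop (disch := assumption))), ← intervalIntegral.integral_const_mul,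
    ← intervalIntegral.integral_const_mul, ← intervalIntegral.integral_const_mul,
    ← intervalIntegral.integral_add (integrable01 (by fun_prop (disch := assumption)))
    (integrable01 (by fun_prop (disch := assumption))),
    ← intervalIntegral.integral_add (integrable01 (by fun_prop (disch := assumption)))
    (integrable01 (by fun_prop (disch := assumption)))]
  refine intervalIntegral.integral_congr fun t _ => ?_
  ring_nf

theorem setIntegral_refTriangle_inv_sqrt_eq_edges (hh : 0 < h) (hQ : ∀ u v, 0 ≤ quad a b c u v)
    (p q : ℝ) :
    ∫ z in refTriangle, 1 / √(quad a b c (z.1 - p) (z.2 - q) + h ^ 2) =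
      q * (∫ t in (-1 : ℝ)..1, kernel a b c h (-p + (t + 1) / 2) (-q) * (1 / 2)) +
        √2 / 2 * (1 - p - q) * (∫ t in (-1 : ℝ)..1,
          kernel a b c h (1 - p - (t + 1) / 2) (-q + (t + 1) / 2) * (√2 / 2)) +
        p * ∫ t in (-1 : ℝ)..1, kernel a b c h (-p) (1 - q - (t + 1) / 2) * (1 / 2) := by
  simp only [one_div, intervalIntegral.integral_mul_const,
    integral_comp_half_add_half fun u => kernel a b c h (-p + u) (-q),
    integral_comp_half_add_half fun u => kernel a b c h (1 - p - u) (-q + u),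
    integral_comp_half_add_half fun u => kernel a b c h (-p) (1 - q - u),
    setIntegral_refTriangle_inv_sqrt hh hQ]
  have h2 : √2 * √2 = 2 := mul_self_sqrt zero_le_two
  linear_combination
    -(1 - p - q) * (∫ u in (0 : ℝ)..1, kernel a b c h (1 - p - u) (-q + u)) / 2 * h2

theorem setIntegral_euclideanSpace_fin_two {E : Type*} [NormedAddCommGroup E] [NormedSpace ℝ E]
    (f : EuclideanSpace ℝ (Fin 2) → E) (s : Set (ℝ × ℝ)) :
    ∫ x in {x : EuclideanSpace ℝ (Fin 2) | (x 0, x 1) ∈ s}, f x = ∫ z in s, f !₂[z.1, z.2] := by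
  let e : (ℝ × ℝ) ≃ᵐ EuclideanSpace ℝ (Fin 2) :=
    MeasurableEquiv.finTwoArrow.symm.trans (MeasurableEquiv.toLp 2 _)
  have he : MeasurePreserving e :=
    (PiLp.volume_preserving_toLp (Fin 2)).comp (volume_preserving_finTwoArrow ℝ).symm
  rw [← he.setIntegral_preimage_emb e.measurableEmbedding]
  rfl

theorem norm_sq_apply_eq_quad {F : Type*} [NormedAddCommGroup F] [InnerProductSpace ℝ F]
    (J : EuclideanSpace ℝ (Fin 2) →ₗ[ℝ] F) (u v : ℝ) :
    ‖J !₂[u, v]‖ ^ 2 =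
      quad (‖J !₂[1, 0]‖ ^ 2) (inner ℝ (J !₂[1, 0]) (J !₂[0, 1])) (‖J !₂[0, 1]‖ ^ 2) u v := by
  have huv : !₂[u, v] = u • !₂[1, 0] + v • !₂[0, 1] := by
    ext i; fin_cases i <;> simp
  rw [huv, map_add, map_smul, map_smul, ← real_inner_self_eq_norm_sq, quad,
    ← real_inner_self_eq_norm_sq, ← real_inner_self_eq_norm_sq]
  simp only [inner_add_left, inner_add_right, real_inner_smul_left, real_inner_smul_right,
    real_inner_comm (J !₂[0, 1])]
  ring

end NearSingular

open NearSingular in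
/-- (Continuation approach for the near-singular first-order term.)
Let `J : ℝ² → ℝ³` be an injective linear map, `h > 0`, and `x̂₀ ∈ ℝ²` a point not on
any of the three lines `x₂ = 0`, `x₁ + x₂ = 1`, `x₁ = 0` containing the edges of the
reference triangle `T̂`. Then
`∫_{T̂} dA(x̂)/√(|J(x̂−x̂₀)|²+h²) = Σ_j ŝ_j·∫_{−1}^1 [(√(|J r_j(t)|²+h²)−h)/|J r_j(t)|²]·|r_j'| dt`,
with the edge parametrizations `r_j`, constant speeds `|r_j'|`, and signed distances
`ŝ_j` of the shifted triangle `T̂ − x̂₀`. -/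
theorem continuation_near_singular_reference_triangle
    (J : EuclideanSpace ℝ (Fin 2) →ₗ[ℝ] EuclideanSpace ℝ (Fin 3))
    (hJ : Function.Injective J)
    (h : ℝ) (hh : 0 < h)
    (x₀ : EuclideanSpace ℝ (Fin 2))
    (hL1 : x₀ 1 ≠ 0) (hL2 : x₀ 0 + x₀ 1 ≠ 1) (hL3 : x₀ 0 ≠ 0)
    (T : Set (EuclideanSpace ℝ (Fin 2)))
    (hT : T = {x : EuclideanSpace ℝ (Fin 2) | 0 ≤ x 0 ∧ 0 ≤ x 1 ∧ x 0 + x 1 ≤ 1})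
    (r₁ r₂ r₃ : ℝ → EuclideanSpace ℝ (Fin 2))
    (hr₁ : ∀ t : ℝ, r₁ t = ![-(x₀ 0) + (t + 1) / 2, -(x₀ 1)])
    (hr₂ : ∀ t : ℝ, r₂ t = ![1 - x₀ 0 - (t + 1) / 2, -(x₀ 1) + (t + 1) / 2])
    (hr₃ : ∀ t : ℝ, r₃ t = ![-(x₀ 0), 1 - x₀ 1 - (t + 1) / 2])
    (s₁ s₂ s₃ : ℝ)
    (hs₁ : s₁ = x₀ 1) (hs₂ : s₂ = Real.sqrt 2 / 2 * (1 - x₀ 0 - x₀ 1)) (hs₃ : s₃ = x₀ 0) :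
    ∫ x in T, 1 / Real.sqrt (‖J (x - x₀)‖ ^ 2 + h ^ 2) =
      s₁ * (∫ t in (-1 : ℝ)..1,
          (Real.sqrt (‖J (r₁ t)‖ ^ 2 + h ^ 2) - h) / ‖J (r₁ t)‖ ^ 2 * (1 / 2))
      + s₂ * (∫ t in (-1 : ℝ)..1,
          (Real.sqrt (‖J (r₂ t)‖ ^ 2 + h ^ 2) - h) / ‖J (r₂ t)‖ ^ 2 * (Real.sqrt 2 / 2))
      + s₃ * (∫ t in (-1 : ℝ)..1,
          (Real.sqrt (‖J (r₃ t)‖ ^ 2 + h ^ 2) - h) / ‖J (r₃ t)‖ ^ 2 * (1 / 2)) := by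
  obtain ⟨a, b, c, hN⟩ : ∃ a b c : ℝ, ∀ u v, ‖J !₂[u, v]‖ ^ 2 = quad a b c u v :=
    ⟨_, _, _, norm_sq_apply_eq_quad J⟩
  have hK : ∀ {u v : ℝ}, ¬(u = 0 ∧ v = 0) →
      (√(‖J !₂[u, v]‖ ^ 2 + h ^ 2) - h) / ‖J !₂[u, v]‖ ^ 2 = kernel a b c h u v := by
    intro u v huv
    have hJuv : J !₂[u, v] ≠ 0 := (map_ne_zero_iff J hJ).2 fun h0 =>
      huv ⟨by simpa using congrArg (fun w : EuclideanSpace ℝ (Fin 2) => w 0) h0,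
        by simpa using congrArg (fun w : EuclideanSpace ℝ (Fin 2) => w 1) h0⟩
    rw [kernel, ← hN, sqrt_add_sq_sub_div_eq_inv (by positivity) hh.le]
  have hsub : ∀ z : ℝ × ℝ, !₂[z.1, z.2] - x₀ = !₂[z.1 - x₀ 0, z.2 - x₀ 1] := fun z => by
    ext i; fin_cases i <;> rfl
  rw [show T = {x | (x 0, x 1) ∈ refTriangle} from hT, setIntegral_euclideanSpace_fin_two]
  simp only [hsub, hN, hs₁, hs₂, hs₃]
  rw [setIntegral_refTriangle_inv_sqrt_eq_edges hh (fun u v => hN u v ▸ sq_nonneg _)]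
  refine congrArg₂ (· + ·) (congrArg₂ (· + ·) (congrArg _ ?_) (congrArg _ ?_)) (congrArg _ ?_) <;>
    refine intervalIntegral.integral_congr fun t _ => ?_
  · rw [show r₁ t = _ from congrArg (WithLp.toLp 2) (hr₁ t),
      hK fun h0 => hL1 (neg_eq_zero.1 h0.2)]
  · rw [show r₂ t = _ from congrArg (WithLp.toLp 2) (hr₂ t),
      hK fun h0 => hL2 (by linarith [h0.1, h0.2])]
  · rw [show r₃ t = _ from congrArg (WithLp.toLp 2) (hr₃ t),
      hK fun h0 => hL3 (neg_eq_zero.1 h0.1)]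
end

section
/- Let F : ℝ² → ℝ³ be twice continuously differentiable, let x₀ ∈ ℝ³ and x̂₀ ∈ ℝ², set h = |F(x̂₀) − x₀|, and let J₀ = DF(x̂₀) denote the derivative of F at x̂₀. Assume the orthogonality condition (F(x̂₀) − x₀) · (J₀ v) = 0 for all v ∈ ℝ². Then there exist constants C > 0 and δ > 0 such that for all x̂ with |x̂ − x̂₀| ≤ δ, | |F(x̂) − x₀|² − |J₀(x̂ − x̂₀)|² − h² | ≤ C·(h + |x̂ − x̂₀|)·|x̂ − x̂₀|². -/
/-!
Write `F p - x₀ = a + b + r` with `a = F p₀ - x₀`, `b = J₀ (p - p₀)` and `r` the first-order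
Taylor remainder, which is `O(‖p - p₀‖²)` since `F` is `C²`. By orthogonality and Pythagoras,
`‖a + b‖² = h² + ‖b‖²`, and `‖a + b + r‖² - ‖a + b‖²` is at most `(2‖a + b‖ + ‖r‖)‖r‖`,
which is `O((h + ‖p - p₀‖)‖p - p₀‖²)`.
-/

open scoped InnerProductSpace Topology

open Metric in
theorem ContDiffAt.exists_norm_sub_sub_fderiv_le_mul_sq {E F : Type*}
    [NormedAddCommGroup E] [NormedSpace ℝ E] [NormedAddCommGroup F] [NormedSpace ℝ F]
    {f : E → F} {x₀ : E} (hf : ContDiffAt ℝ 2 f x₀) :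
    ∃ K ≥ 0, ∃ δ > 0, ∀ x, ‖x - x₀‖ ≤ δ →
      ‖f x - f x₀ - fderiv ℝ f x₀ (x - x₀)‖ ≤ K * ‖x - x₀‖ ^ 2 := by
  obtain ⟨K, t, ht, hlip⟩ := (hf.fderiv_right (m := 1) (by norm_num)).exists_lipschitzOnWith
  have hdiff : ∀ᶠ y in 𝓝 x₀, DifferentiableAt ℝ f y :=
    (hf.eventually (by simp)).mono fun y hy => hy.differentiableAt (by norm_num)
  obtain ⟨δ, hδ, hball⟩ := nhds_basis_closedBall.mem_iff.1 (Filter.inter_mem ht hdiff)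
  refine ⟨K, K.coe_nonneg, δ, hδ, fun x hx => ?_⟩
  have hsub : closedBall x₀ ‖x - x₀‖ ⊆ closedBall x₀ δ := closedBall_subset_closedBall hx
  have hbound : ∀ y ∈ closedBall x₀ ‖x - x₀‖,
      ‖fderiv ℝ f y - fderiv ℝ f x₀‖ ≤ K * ‖x - x₀‖ := fun y hy => by
    calc ‖fderiv ℝ f y - fderiv ℝ f x₀‖ ≤ K * ‖y - x₀‖ := by
          simpa only [dist_eq_norm] using
            hlip.dist_le_mul y (hball (hsub hy)).1 x₀ (hball (mem_closedBall_self hδ.le)).1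
      _ ≤ K * ‖x - x₀‖ := by
          gcongr
          simpa only [mem_closedBall, dist_eq_norm] using hy
  calc ‖f x - f x₀ - fderiv ℝ f x₀ (x - x₀)‖ ≤ K * ‖x - x₀‖ * ‖x - x₀‖ :=
        (convex_closedBall x₀ _).norm_image_sub_le_of_norm_hasFDerivWithin_le'
          (fun y hy => (hball (hsub hy)).2.hasFDerivAt.hasFDerivWithinAt) hbound
          (mem_closedBall_self (norm_nonneg _)) (by simp [dist_eq_norm])
    _ = K * ‖x - x₀‖ ^ 2 := by ring

theorem abs_norm_add_sq_sub_norm_sq_le {E : Type*} [SeminormedAddCommGroup E] (u r : E) :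
    |‖u + r‖ ^ 2 - ‖u‖ ^ 2| ≤ (2 * ‖u‖ + ‖r‖) * ‖r‖ := by
  have hdiff : |‖u + r‖ - ‖u‖| ≤ ‖r‖ := by
    simpa using abs_norm_sub_norm_le (u + r) u
  have hsum : ‖u + r‖ + ‖u‖ ≤ 2 * ‖u‖ + ‖r‖ := by
    linarith [norm_add_le u r]
  calc |‖u + r‖ ^ 2 - ‖u‖ ^ 2| = |‖u + r‖ - ‖u‖| * (‖u + r‖ + ‖u‖) := by
        rw [sq_sub_sq, abs_mul, abs_of_nonneg (by positivity : 0 ≤ ‖u + r‖ + ‖u‖), mul_comm]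
    _ ≤ ‖r‖ * (2 * ‖u‖ + ‖r‖) := by gcongr
    _ = (2 * ‖u‖ + ‖r‖) * ‖r‖ := mul_comm _ _

theorem abs_norm_add_add_sq_sub_le_of_inner_eq_zero {E : Type*} [NormedAddCommGroup E]
    [InnerProductSpace ℝ E] {a b : E} (hab : ⟪a, b⟫_ℝ = 0) (r : E) :
    |‖a + b + r‖ ^ 2 - ‖b‖ ^ 2 - ‖a‖ ^ 2| ≤ (2 * (‖a‖ + ‖b‖) + ‖r‖) * ‖r‖ := by
  have hpyth : ‖a + b‖ ^ 2 = ‖a‖ ^ 2 + ‖b‖ ^ 2 := by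
    rw [norm_add_sq_real, hab]; ring
  calc |‖a + b + r‖ ^ 2 - ‖b‖ ^ 2 - ‖a‖ ^ 2| = |‖a + b + r‖ ^ 2 - ‖a + b‖ ^ 2| := by
        rw [hpyth]; ring_nf
    _ ≤ (2 * ‖a + b‖ + ‖r‖) * ‖r‖ := abs_norm_add_sq_sub_norm_sq_le _ _
    _ ≤ (2 * (‖a‖ + ‖b‖) + ‖r‖) * ‖r‖ := by gcongr; exact norm_add_le a b

/-- (Second-order expansion of the squared distance.)
Let `F : ℝ² → ℝ³` be C², `x₀ ∈ ℝ³`, `x̂₀ ∈ ℝ²`, `h = |F(x̂₀) − x₀|`, and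
`J₀ = DF(x̂₀)`. If `(F(x̂₀) − x₀) · (J₀ v) = 0` for all `v ∈ ℝ²`, then there exist
`C > 0` and `δ > 0` such that for all `x̂` with `|x̂ − x̂₀| ≤ δ`,
`| |F(x̂) − x₀|² − |J₀(x̂ − x̂₀)|² − h² | ≤ C·(h + |x̂ − x̂₀|)·|x̂ − x̂₀|²`. -/
theorem squared_distance_expansion
    (F : EuclideanSpace ℝ (Fin 2) → EuclideanSpace ℝ (Fin 3))
    (hF : ContDiff ℝ 2 F)
    (x₀ : EuclideanSpace ℝ (Fin 3)) (p₀ : EuclideanSpace ℝ (Fin 2))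
    (h : ℝ) (hh : h = ‖F p₀ - x₀‖)
    (J₀ : EuclideanSpace ℝ (Fin 2) →L[ℝ] EuclideanSpace ℝ (Fin 3))
    (hJ₀ : J₀ = fderiv ℝ F p₀)
    (horth : ∀ v : EuclideanSpace ℝ (Fin 2), ⟪F p₀ - x₀, J₀ v⟫_ℝ = 0) :
    ∃ C > 0, ∃ δ > 0, ∀ p : EuclideanSpace ℝ (Fin 2), ‖p - p₀‖ ≤ δ →
      |‖F p - x₀‖ ^ 2 - ‖J₀ (p - p₀)‖ ^ 2 - h ^ 2| ≤
        C * (h + ‖p - p₀‖) * ‖p - p₀‖ ^ 2 := by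
  obtain ⟨K, hK, δ, hδ, htaylor⟩ := hF.contDiffAt.exists_norm_sub_sub_fderiv_le_mul_sq
  rw [← hJ₀] at htaylor
  refine ⟨K * (2 + 2 * ‖J₀‖ + K * δ) + 1, by positivity, δ, hδ, fun p hp => ?_⟩
  set t := ‖p - p₀‖
  set r := F p - F p₀ - J₀ (p - p₀)
  have hr : ‖r‖ ≤ K * t ^ 2 := htaylor p hp
  have hdecomp : F p - x₀ = (F p₀ - x₀) + J₀ (p - p₀) + r := by simp only [r]; abel
  have hh0 : 0 ≤ h := by rw [hh]; positivity
  calc |‖F p - x₀‖ ^ 2 - ‖J₀ (p - p₀)‖ ^ 2 - h ^ 2|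
      ≤ (2 * (h + ‖J₀ (p - p₀)‖) + ‖r‖) * ‖r‖ := by
        rw [hdecomp, hh]; exact abs_norm_add_add_sq_sub_le_of_inner_eq_zero (horth _) r
    _ ≤ (2 * (h + ‖J₀‖ * t) + K * δ * t) * (K * t ^ 2) := by
        gcongr
        · exact J₀.le_opNorm _
        · calc ‖r‖ ≤ K * t ^ 2 := hr
            _ = K * t * t := by ring
            _ ≤ K * δ * t := by gcongr
    _ = K * (2 * h + 2 * ‖J₀‖ * t + K * δ * t) * t ^ 2 := by ring
    _ ≤ K * ((2 + 2 * ‖J₀‖ + K * δ) * (h + t)) * t ^ 2 := by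
        gcongr
        nlinarith [norm_nonneg (p - p₀), mul_nonneg (norm_nonneg J₀) hh0,
          mul_nonneg (mul_nonneg hK hδ.le) hh0]
    _ = K * (2 + 2 * ‖J₀‖ + K * δ) * (h + t) * t ^ 2 := by ring
    _ ≤ (K * (2 + 2 * ‖J₀‖ + K * δ) + 1) * (h + t) * t ^ 2 := by
        gcongr
        linarith
end
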